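/- For every integer n > 2, limsup_{H→∞} #C̄_n(H) / (2H(2H+1)^n) ≤ 2 sinh(∑_p 1/p²) < 1, where the sum runs over all primes p; in particular limsup_{H→∞} #C̄_n(H) / (2H(2H+1)^n) < 1. -/

import Mathlib

open Polynomial Filter
open Topology

/-- `f ∈ ℤ[x]` is Eisenstein with respect to the prime `p`:
`p ∣ aᵢ` for all `i` below the degree, `p² ∤ a₀` and `p ∤ aₙ`. -/
def IsEisensteinWith (f : Polynomial ℤ) (p : ℕ) : Prop :=
  (∀ i < f.natDegree, (p : ℤ) ∣ f.coeff i) ∧ ¬ ((p : ℤ)^2 ∣ f.coeff 0) ∧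
    ¬ ((p : ℤ) ∣ f.leadingCoeff)
/-- `f` is an Eisenstein polynomial: it is Eisenstein with respect to some prime. -/
def IsEisenstein (f : Polynomial ℤ) : Prop :=
  ∃ p : ℕ, p.Prime ∧ IsEisensteinWith f p
/-- Height of an integer polynomial: the maximum of the absolute values of its coefficients. -/
def polyHeight (f : Polynomial ℤ) : ℕ :=
  (Finset.range (f.natDegree + 1)).sup fun i => (f.coeff i).natAbs

/-- `C̄_n(H)`: polynomials `f` of degree exactly `n` and height at most `H` such that `f(x+s)`
is Eisenstein and also of height at most `H`, for some integer `s`. -/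
def CbarSet (n H : ℕ) : Set (Polynomial ℤ) :=
  {f | f.natDegree = n ∧ polyHeight f ≤ H ∧
    ∃ s : ℤ, IsEisenstein (f.comp (X + C s)) ∧ polyHeight (f.comp (X + C s)) ≤ H}

open Topology

/-! If `f(x + s)` is Eisenstein at `p` and has height at most `H`, then `p` divides its nonzero
constant term, so `p ≤ H`; and since a shift by a multiple of `p` keeps a polynomial of degree
`≥ 2` Eisenstein at `p`, we may take `0 ≤ s < p`. For fixed `p` and `s`, the residue of each
lower coefficient `aᵢ` modulo `p` is forced by the higher coefficients (the `i`-th coefficient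
of `f(x + s)` is `aᵢ` plus a combination of them), so `f` is determined by `aₙ` and the quotients
`aᵢ / p`. This gives at most `p (2H + 1) (2⌊H/p⌋ + 2)ⁿ` polynomials per prime `p ≤ H`; after
normalisation the contribution of `p` tends to `p¹⁻ⁿ ≤ p⁻²`, and dominated convergence bounds the
limsup by `P = ∑ₚ p⁻² ≤ 2 sinh P`. Finally `P ≤ 0.4784` (primes up to `29`, plus
`∑_{m > 30} m⁻² ≤ 1/30`) and `exp 0.4784 < 1.614` give `2 sinh P < 1`. -/

namespace Polynomial

variable {R : Type*} [CommRing R]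

theorem dvd_coeff_taylor_sub (c : R) (g : R[X]) (i : ℕ) :
    c ∣ (taylor c g).coeff i - g.coeff i := by
  simpa [taylor_coeff, ← taylor_coeff, taylor_zero] using sub_dvd_eval_sub c 0 (hasseDeriv i g)

theorem sq_dvd_coeff_zero_taylor_sub (c : R) (g : R[X]) :
    c ^ 2 ∣ (taylor c g).coeff 0 - g.coeff 0 - g.coeff 1 * c := by
  obtain ⟨k, hk⟩ := exists_mul_sq_add_linear_part_eq_eval_add g 0 c
  rw [zero_add] at hk
  refine ⟨k, ?_⟩
  rw [taylor_coeff_zero, ← hk, ← coeff_zero_eq_eval_zero, ← coeff_zero_eq_eval_zero,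
    coeff_derivative]
  ring

end Polynomial

theorem natAbs_coeff_le_of_polyHeight_le {f : Polynomial ℤ} {H : ℕ} (hf : polyHeight f ≤ H)
    (i : ℕ) : (f.coeff i).natAbs ≤ H := by
  rcases le_or_gt i f.natDegree with h | h
  · exact (Finset.le_sup (f := fun i => (f.coeff i).natAbs)
      (Finset.mem_range.mpr (Nat.lt_succ_of_le h))).trans hf
  · simp [f.coeff_eq_zero_of_natDegree_lt h]

namespace IsEisensteinWith

variable {g : Polynomial ℤ} {p : ℕ}

theorem taylor_mul (hE : IsEisensteinWith g p) (hg : 2 ≤ g.natDegree) (t : ℤ) :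
    IsEisensteinWith (taylor (p * t) g) p := by
  obtain ⟨hlow, hzero, hlead⟩ := hE
  have hp : (p : ℤ) ∣ p * t := dvd_mul_right _ _
  refine ⟨fun i hi => ?_, fun h => hzero ?_, by rwa [leadingCoeff_taylor]⟩
  · rw [natDegree_taylor] at hi
    simpa using (hp.trans (dvd_coeff_taylor_sub _ g i)).add (hlow i hi)
  · have h1 : (p : ℤ) ^ 2 ∣ g.coeff 1 * (p * t) := by
      rw [sq]; exact mul_dvd_mul (hlow 1 (by omega)) hp
    have h2 := (pow_dvd_pow_of_dvd hp 2).trans (sq_dvd_coeff_zero_taylor_sub (p * t : ℤ) g)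
    simpa only [sub_sub, sub_sub_cancel, add_sub_cancel_right] using (h.sub h2).sub h1

theorem le_of_polyHeight_le (hE : IsEisensteinWith g p) (hg : 1 ≤ g.natDegree) {H : ℕ}
    (hH : polyHeight g ≤ H) : p ≤ H := by
  have h0 : g.coeff 0 ≠ 0 := fun h => hE.2.1 (h ▸ dvd_zero _)
  exact (Nat.le_of_dvd (Int.natAbs_pos.mpr h0) (Int.natCast_dvd.mp (hE.1 0 hg))).trans
    (natAbs_coeff_le_of_polyHeight_le hH 0)

end IsEisensteinWith

theorem exists_prime_shift_of_mem_CbarSet {n H : ℕ} (hn : 2 ≤ n) {f : Polynomial ℤ}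
    (hf : f ∈ CbarSet n H) :
    ∃ p ≤ H, p.Prime ∧ ∃ r < p, IsEisensteinWith (taylor (r : ℤ) f) p := by
  obtain ⟨hdeg, -, s, ⟨p, hp, hE⟩, hHs⟩ := hf
  rw [← taylor_apply] at hE hHs
  have hdeg' : (taylor s f).natDegree = n := by rw [natDegree_taylor, hdeg]
  have hp0 : (0 : ℤ) < p := by exact_mod_cast hp.pos
  have hshift : taylor (s % p) f = taylor (p * -(s / p)) (taylor s f) := by
    rw [taylor_taylor, Int.emod_def]
    ring_nf
  have hlt := Int.emod_lt_of_pos s hp0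
  refine ⟨p, hE.le_of_polyHeight_le (by omega) hHs, hp, (s % p).toNat, by omega, ?_⟩
  rw [Int.toNat_of_nonneg (Int.emod_nonneg s hp0.ne'), hshift]
  exact hE.taylor_mul (by omega) _

theorem Int.eq_of_ediv_eq_of_dvd_sub {a b p : ℤ} (hdiv : a / p = b / p) (hdvd : p ∣ a - b) :
    a = b := by
  have hmod : b % p = a % p := Int.modEq_iff_dvd.mpr hdvd
  rw [← Int.mul_ediv_add_emod a p, ← Int.mul_ediv_add_emod b p, hdiv, hmod]

theorem Int.ediv_mem_Icc_of_natAbs_le {a : ℤ} {H p : ℕ} (hp : 0 < p) (ha : a.natAbs ≤ H) :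
    a / p ∈ Finset.Icc (-((H / p : ℕ) : ℤ) - 1) (H / p : ℕ) := by
  have hp' : (0 : ℤ) < p := by exact_mod_cast hp
  have hlt := Int.lt_ediv_add_one_mul_self (H : ℤ) hp'
  have haH : -(H : ℤ) ≤ a := by omega
  rw [Finset.mem_Icc, Int.natCast_div, Int.le_ediv_iff_mul_le hp']
  exact ⟨by nlinarith, Int.ediv_le_ediv hp' (by omega)⟩

def shiftedEisensteinSet (n H p : ℕ) (r : ℤ) : Set (Polynomial ℤ) :=
  {f | f.natDegree = n ∧ polyHeight f ≤ H ∧ IsEisensteinWith (taylor r f) p}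

def eisensteinCode (n p : ℕ) (f : Polynomial ℤ) : ℤ × (Fin n → ℤ) :=
  (f.coeff n, fun i => f.coeff i / p)

noncomputable def eisensteinCodeBox (n H p : ℕ) : Finset (ℤ × (Fin n → ℤ)) :=
  Finset.Icc (-(H : ℤ)) H ×ˢ
    Fintype.piFinset fun _ => Finset.Icc (-((H / p : ℕ) : ℤ) - 1) (H / p : ℕ)

theorem card_eisensteinCodeBox (n H p : ℕ) :
    (eisensteinCodeBox n H p).card = (2 * H + 1) * (2 * (H / p) + 2) ^ n := by
  simp only [eisensteinCodeBox, Finset.card_product, Fintype.card_piFinset, Int.card_Icc,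
    Finset.prod_const, Finset.card_univ, Fintype.card_fin]
  congr 2 <;> omega

theorem mapsTo_eisensteinCode {n H p : ℕ} (hp : 0 < p) (r : ℤ) :
    Set.MapsTo (eisensteinCode n p) (shiftedEisensteinSet n H p r) (eisensteinCodeBox n H p) := by
  intro f ⟨_, hH, _⟩
  have hcoeff := natAbs_coeff_le_of_polyHeight_le hH
  simp only [eisensteinCode, eisensteinCodeBox, Finset.coe_product, Set.mem_prod,
    Finset.mem_coe, Fintype.mem_piFinset, Finset.mem_Icc]
  exact ⟨by have := hcoeff n; omega,
    fun i => Finset.mem_Icc.mp (Int.ediv_mem_Icc_of_natAbs_le hp (hcoeff i))⟩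

theorem injOn_eisensteinCode (n H p : ℕ) (r : ℤ) :
    Set.InjOn (eisensteinCode n p) (shiftedEisensteinSet n H p r) := by
  intro f ⟨hf, _, hfE⟩ g ⟨hg, _, hgE⟩ hfg
  simp only [eisensteinCode, Prod.mk.injEq, funext_iff] at hfg
  obtain ⟨hlead, hdiv⟩ := hfg
  by_contra hne
  set d := f - g
  have hd : d ≠ 0 := sub_ne_zero.mpr hne
  have hdn : d.natDegree < n := by
    refine lt_of_le_of_ne ((natDegree_sub_le f g).trans (by omega)) fun h => hd ?_
    rw [← leadingCoeff_eq_zero, leadingCoeff, h, coeff_sub, hlead, sub_self]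
  have hdvd : (p : ℤ) ∣ d.leadingCoeff := by
    rw [← coeff_taylor_natDegree (r := r), map_sub, coeff_sub]
    exact (hfE.1 _ (by rw [natDegree_taylor]; omega)).sub
      (hgE.1 _ (by rw [natDegree_taylor]; omega))
  refine leadingCoeff_ne_zero.mpr hd (sub_eq_zero.mpr ?_)
  rw [leadingCoeff, coeff_sub] at hdvd
  exact Int.eq_of_ediv_eq_of_dvd_sub (hdiv ⟨_, hdn⟩) hdvd

theorem shiftedEisensteinSet_finite {n H p : ℕ} (hp : 0 < p) (r : ℤ) :
    (shiftedEisensteinSet n H p r).Finite :=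
  Set.Finite.of_injOn (mapsTo_eisensteinCode hp r) (injOn_eisensteinCode n H p r)
    (Finset.finite_toSet _)

theorem ncard_shiftedEisensteinSet_le {n H p : ℕ} (hp : 0 < p) (r : ℤ) :
    (shiftedEisensteinSet n H p r).ncard ≤ (eisensteinCodeBox n H p).card := by
  rw [← Set.ncard_coe_finset]
  exact Set.ncard_le_ncard_of_injOn _ (mapsTo_eisensteinCode hp r) (injOn_eisensteinCode n H p r)
    (Finset.finite_toSet _)

theorem ncard_CbarSet_le {n : ℕ} (hn : 2 ≤ n) (H : ℕ) :
    (CbarSet n H).ncard ≤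
      ∑ p ∈ Finset.range (H + 1) with p.Prime, p * (eisensteinCodeBox n H p).card := by
  set P := (Finset.range (H + 1)).filter Nat.Prime
  have hcover : CbarSet n H ⊆ ⋃ p ∈ P, ⋃ r ∈ Finset.range p, shiftedEisensteinSet n H p r := by
    intro f hf
    obtain ⟨p, hpH, hp, r, hr, hE⟩ := exists_prime_shift_of_mem_CbarSet hn hf
    simp only [Set.mem_iUnion]
    exact ⟨p, Finset.mem_filter.mpr ⟨Finset.mem_range.mpr (by omega), hp⟩, r,
      Finset.mem_range.mpr hr, hf.1, hf.2.1, hE⟩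
  have hfinite : (⋃ p ∈ P, ⋃ r ∈ Finset.range p, shiftedEisensteinSet n H p r).Finite :=
    P.finite_toSet.biUnion fun p hp => (Finset.finite_toSet _).biUnion fun r _ =>
      shiftedEisensteinSet_finite (Finset.mem_filter.mp hp).2.pos _
  calc (CbarSet n H).ncard
      ≤ (⋃ p ∈ P, ⋃ r ∈ Finset.range p, shiftedEisensteinSet n H p r).ncard :=
        Set.ncard_le_ncard hcover hfinite
    _ ≤ ∑ p ∈ P, (⋃ r ∈ Finset.range p, shiftedEisensteinSet n H p r).ncard :=
        Finset.set_ncard_biUnion_le _ _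
    _ ≤ ∑ p ∈ P, ∑ r ∈ Finset.range p, (shiftedEisensteinSet n H p r).ncard :=
        Finset.sum_le_sum fun p _ => Finset.set_ncard_biUnion_le _ _
    _ ≤ ∑ p ∈ P, p * (eisensteinCodeBox n H p).card := by
        refine Finset.sum_le_sum fun p hp => ?_
        simpa using Finset.sum_le_sum fun r (_ : r ∈ Finset.range p) =>
          ncard_shiftedEisensteinSet_le (n := n) (H := H) (Finset.mem_filter.mp hp).2.pos (r : ℤ)

theorem tendsto_mul_natCast_add_div_mul_natCast_add {c : ℝ} (hc : c ≠ 0) (a b : ℝ) :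
    Tendsto (fun H : ℕ => (c * H + a) / (c * H + b)) atTop (𝓝 1) := by
  have h : Tendsto (fun H : ℕ => (c + a / H) / (c + b / H)) atTop (𝓝 ((c + 0) / (c + 0))) :=
    (tendsto_const_nhds.add (tendsto_const_div_atTop_nhds_zero_nat a)).div
      (tendsto_const_nhds.add (tendsto_const_div_atTop_nhds_zero_nat b)) (by simpa)
  rw [add_zero, div_self hc] at h
  refine h.congr' ?_
  filter_upwards [eventually_ne_atTop 0] with H hH
  have hH' : (H : ℝ) ≠ 0 := Nat.cast_ne_zero.mpr hH
  rw [← mul_div_mul_right _ _ hH', add_mul, add_mul, div_mul_cancel₀ _ hH',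
    div_mul_cancel₀ _ hH', mul_comm c]

theorem div_pow_le_one_div_sq {x : ℝ} (hx : 1 ≤ x) {n : ℕ} (hn : 3 ≤ n) :
    x / x ^ n ≤ 1 / x ^ 2 := by
  rw [div_le_div_iff₀ (by positivity) (by positivity), one_mul, ← pow_succ']
  exact pow_le_pow_right₀ hx hn

/-- For a prime `m ≤ H`: `m` shifts times `(2H + 1) (2⌊H/m⌋ + 2)ⁿ` codes, divided by
`2H (2H + 1)ⁿ`, after bounding `⌊H/m⌋ ≤ H/m`. -/
noncomputable def primeTerm (n H m : ℕ) : ℝ :=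
  if m.Prime ∧ m ≤ H then
    (m : ℝ) / m ^ n * (((2 * H + 2 * m) / (2 * H + 1)) ^ n * ((2 * H + 1) / (2 * H)))
  else 0

theorem primeTerm_nonneg (n H m : ℕ) : 0 ≤ primeTerm n H m := by
  unfold primeTerm
  split_ifs <;> positivity

theorem tendsto_primeTerm (n m : ℕ) :
    Tendsto (fun H => primeTerm n H m) atTop
      (𝓝 ({m : ℕ | m.Prime}.indicator (fun m => (m : ℝ) / m ^ n) m)) := by
  by_cases hm : m.Prime
  · have hw : Tendsto (fun H : ℕ => ((2 * H + 2 * m) / (2 * H + 1) : ℝ) ^ n *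
        ((2 * H + 1) / (2 * H))) atTop (𝓝 1) := by
      simpa using ((tendsto_mul_natCast_add_div_mul_natCast_add two_ne_zero (2 * m) 1).pow n).mul
        (tendsto_mul_natCast_add_div_mul_natCast_add two_ne_zero 1 0)
    rw [Set.indicator_of_mem (s := {m : ℕ | m.Prime}) hm, ← mul_one ((m : ℝ) / m ^ n)]
    refine (hw.const_mul _).congr' ?_
    filter_upwards [eventually_ge_atTop m] with H hH
    simp [primeTerm, hm, hH]
  · simp [primeTerm, hm, Set.indicator_of_notMem]

theorem norm_primeTerm_le {n : ℕ} (hn : 3 ≤ n) (H m : ℕ) :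
    ‖primeTerm n H m‖ ≤ 2 ^ (n + 1) * (1 / (m : ℝ) ^ 2) := by
  rw [Real.norm_of_nonneg (primeTerm_nonneg n H m), primeTerm]
  split_ifs with h
  · have hm : (2 : ℝ) ≤ m := by exact_mod_cast h.1.two_le
    have hmH : (m : ℝ) ≤ H := by exact_mod_cast h.2
    have hH : (0 : ℝ) < H := by linarith
    have h1 : (2 * H + 2 * m) / (2 * H + 1) ≤ (2 : ℝ) := by
      rw [div_le_iff₀ (by positivity)]; linarith
    have h2 : (2 * H + 1) / (2 * H) ≤ (2 : ℝ) := by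
      rw [div_le_iff₀ (by positivity)]; linarith
    calc (m : ℝ) / m ^ n * (((2 * H + 2 * m) / (2 * H + 1)) ^ n * ((2 * H + 1) / (2 * H)))
        ≤ 1 / (m : ℝ) ^ 2 * (2 ^ n * 2) := by
          gcongr ?_ * (?_ ^ n * ?_)
          exact div_pow_le_one_div_sq (by linarith) hn
      _ = 2 ^ (n + 1) * (1 / (m : ℝ) ^ 2) := by ring
  · positivity

theorem mul_card_eisensteinCodeBox_div_le {n H m : ℕ} (hm : 0 < m) (hH : 0 < H) :
    ((m * (eisensteinCodeBox n H m).card : ℕ) : ℝ) / (2 * H * (2 * H + 1) ^ n) ≤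
      (m : ℝ) / m ^ n * (((2 * H + 2 * m) / (2 * H + 1)) ^ n * ((2 * H + 1) / (2 * H))) := by
  have hm' : (0 : ℝ) < m := by exact_mod_cast hm
  have hH' : (0 : ℝ) < H := by exact_mod_cast hH
  have hq : 2 * ((H / m : ℕ) : ℝ) + 2 ≤ (2 * H + 2 * m) / m := by
    have : ((H / m : ℕ) : ℝ) ≤ H / m := Nat.cast_div_le
    rw [add_div, mul_div_assoc, mul_div_assoc, div_self hm'.ne']
    linarith
  calc ((m * (eisensteinCodeBox n H m).card : ℕ) : ℝ) / (2 * H * (2 * H + 1) ^ n)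
      = m * ((2 * H + 1) * (2 * ((H / m : ℕ) : ℝ) + 2) ^ n) / (2 * H * (2 * H + 1) ^ n) := by
        rw [card_eisensteinCodeBox]; push_cast; ring
    _ ≤ m * ((2 * H + 1) * ((2 * H + 2 * m) / m) ^ n) / (2 * H * (2 * H + 1) ^ n) := by
        gcongr
    _ = (m : ℝ) / m ^ n * (((2 * H + 2 * m) / (2 * H + 1)) ^ n * ((2 * H + 1) / (2 * H))) := by
        rw [div_pow, div_pow]
        field_simp

theorem card_CbarSet_div_le_tsum_primeTerm {n H : ℕ} (hn : 2 ≤ n) (hH : 0 < H) :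
    (Nat.card (CbarSet n H) : ℝ) / (2 * H * (2 * H + 1) ^ n) ≤ ∑' m, primeTerm n H m := by
  have hsupport : ∀ m ∉ Finset.range (H + 1), primeTerm n H m = 0 := fun m hm =>
    if_neg fun h => hm (Finset.mem_range.mpr (Nat.lt_succ_of_le h.2))
  have hsum : ∑ m ∈ Finset.range (H + 1), primeTerm n H m =
      ∑ m ∈ Finset.range (H + 1) with m.Prime,
        (m : ℝ) / m ^ n * (((2 * H + 2 * m) / (2 * H + 1)) ^ n * ((2 * H + 1) / (2 * H))) := by
    rw [Finset.sum_filter]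
    refine Finset.sum_congr rfl fun m hm => ?_
    simp [primeTerm, Nat.lt_succ_iff.mp (Finset.mem_range.mp hm)]
  have hcard := ncard_CbarSet_le hn H
  rw [← Nat.card_coe_set_eq] at hcard
  rw [tsum_eq_sum hsupport, hsum]
  calc (Nat.card (CbarSet n H) : ℝ) / (2 * H * (2 * H + 1) ^ n)
      ≤ ((∑ p ∈ Finset.range (H + 1) with p.Prime,
          p * (eisensteinCodeBox n H p).card : ℕ) : ℝ) / (2 * H * (2 * H + 1) ^ n) := by
        gcongr
    _ ≤ _ := by
        rw [Nat.cast_sum, Finset.sum_div]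
        exact Finset.sum_le_sum fun p hp =>
          mul_card_eisensteinCodeBox_div_le (Finset.mem_filter.mp hp).2.pos hH

theorem limsup_card_CbarSet_div_le_tsum {n : ℕ} (hn : 3 ≤ n) :
    limsup (fun H : ℕ =>
        (Nat.card (CbarSet n H) : ℝ) / (2 * (H : ℝ) * (2 * (H : ℝ) + 1) ^ n)) atTop ≤
      ∑' p : Nat.Primes, ((p : ℕ) : ℝ) / (p : ℕ) ^ n := by
  have hlim : Tendsto (fun H => ∑' m, primeTerm n H m) atTop
      (𝓝 (∑' m, {m : ℕ | m.Prime}.indicator (fun m => (m : ℝ) / m ^ n) m)) :=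
    tendsto_tsum_of_dominated_convergence
      ((Real.summable_one_div_nat_pow.mpr one_lt_two).mul_left _) (tendsto_primeTerm n)
      (Eventually.of_forall (norm_primeTerm_le hn))
  calc _ ≤ limsup (fun H => ∑' m, primeTerm n H m) atTop := by
        refine limsup_le_limsup ?_ (isCoboundedUnder_le_of_le atTop fun H => by positivity)
          hlim.isBoundedUnder_le
        filter_upwards [eventually_gt_atTop 0] with H hH
        exact card_CbarSet_div_le_tsum_primeTerm (by omega) hH
    _ = _ := hlim.limsup_eq.trans (tsum_subtype {m : ℕ | m.Prime} _).symm

theorem tsum_prime_div_pow_le {n : ℕ} (hn : 3 ≤ n) :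
    ∑' p : Nat.Primes, ((p : ℕ) : ℝ) / (p : ℕ) ^ n ≤ ∑' p : Nat.Primes, 1 / ((p : ℕ) : ℝ) ^ 2 := by
  have hle (p : Nat.Primes) : ((p : ℕ) : ℝ) / (p : ℕ) ^ n ≤ 1 / ((p : ℕ) : ℝ) ^ 2 :=
    div_pow_le_one_div_sq (by exact_mod_cast p.2.one_le) hn
  have hsum : Summable fun p : Nat.Primes => 1 / ((p : ℕ) : ℝ) ^ 2 :=
    (Real.summable_one_div_nat_pow.mpr one_lt_two).comp_injective Subtype.val_injective
  exact Summable.tsum_le_tsum hle (hsum.of_nonneg_of_le (fun _ => by positivity) hle) hsum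

theorem tsum_le_sum_range_add_inv {f : ℕ → ℝ} (hf0 : ∀ m, 0 ≤ f m)
    (hf : ∀ m, f m ≤ ((m : ℝ) ^ 2)⁻¹) {k : ℕ} (hk : k ≠ 0) :
    ∑' m, f m ≤ ∑ m ∈ Finset.range (k + 1), f m + (k : ℝ)⁻¹ := by
  refine Real.tsum_le_of_sum_range_le hf0 fun N => ?_
  calc ∑ m ∈ Finset.range N, f m ≤ ∑ m ∈ Finset.range (k + 1 + N), f m :=
        Finset.sum_le_sum_of_subset_of_nonneg (Finset.range_subset_range.mpr (by omega))
          fun m _ _ => hf0 m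
    _ = ∑ m ∈ Finset.range (k + 1), f m + ∑ m ∈ Finset.Ioc k (k + N), f m := by
        rw [← Finset.sum_range_add_sum_Ico _ (by omega : k + 1 ≤ k + 1 + N),
          ← Finset.Ico_add_one_add_one_eq_Ioc, add_right_comm]
    _ ≤ ∑ m ∈ Finset.range (k + 1), f m + ∑ m ∈ Finset.Ioc k (k + N), ((m : ℝ) ^ 2)⁻¹ := by
        gcongr with m; exact hf m
    _ ≤ ∑ m ∈ Finset.range (k + 1), f m + (k : ℝ)⁻¹ := by
        gcongr
        exact (sum_Ioc_inv_sq_le_sub hk (by omega)).trans (sub_le_self _ (by positivity))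

theorem tsum_one_div_prime_sq_le : ∑' p : Nat.Primes, 1 / ((p : ℕ) : ℝ) ^ 2 ≤ 4784 / 10000 := by
  have h := tsum_le_sum_range_add_inv (f := {m : ℕ | m.Prime}.indicator fun m => 1 / (m : ℝ) ^ 2)
    (fun m => Set.indicator_nonneg (fun _ _ => by positivity) m)
    (fun m => by simpa using Set.indicator_le_self' (fun _ _ => by positivity) m) (k := 30)
    (by norm_num)
  rw [← tsum_subtype] at h
  refine h.trans ?_
  norm_num [Finset.sum_range_succ, Set.indicator_apply]

theorem two_mul_sinh_lt_one_of_le {x : ℝ} (hx : x ≤ 4784 / 10000) : 2 * Real.sinh x < 1 := by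
  refine (mul_le_mul_of_nonneg_left (Real.sinh_le_sinh.mpr hx) zero_le_two).trans_lt ?_
  have hy1 : 1 ≤ Real.exp (4784 / 10000) := Real.one_le_exp (by norm_num)
  have hy : Real.exp (4784 / 10000) ≤ 1614 / 1000 :=
    (Real.exp_bound' (by norm_num) (by norm_num) (n := 5) (by norm_num)).trans
      (by norm_num [Finset.sum_range_succ, Nat.factorial])
  rw [Real.sinh_eq, Real.exp_neg]
  have hinv := mul_inv_cancel₀ (Real.exp_pos (4784 / 10000)).ne'
  nlinarith

/-- For every `n > 2`: `limsup_{H→∞} #C̄_n(H)/(2H(2H+1)ⁿ) ≤ 2 sinh(∑_p 1/p²) < 1`. -/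
theorem limsup_card_CbarSet (n : ℕ) (hn : 2 < n) :
    limsup (fun H : ℕ =>
        (Nat.card (CbarSet n H) : ℝ) / (2 * (H : ℝ) * (2 * (H : ℝ) + 1)^n)) atTop ≤
      2 * Real.sinh (∑' p : Nat.Primes, 1 / ((p : ℕ) : ℝ)^2) ∧
    2 * Real.sinh (∑' p : Nat.Primes, 1 / ((p : ℕ) : ℝ)^2) < 1 := by
  set P := ∑' p : Nat.Primes, 1 / ((p : ℕ) : ℝ) ^ 2
  have hP : 0 ≤ P := tsum_nonneg fun _ => by positivity
  refine ⟨?_, ?_⟩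
  · calc _ ≤ P := (limsup_card_CbarSet_div_le_tsum hn).trans (tsum_prime_div_pow_le hn)
      _ ≤ 2 * Real.sinh P := by linarith [Real.self_le_sinh_iff.mpr hP]
  · exact two_mul_sinh_lt_one_of_le tsum_one_div_prime_sq_le
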